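/- Fix p ∈ [1, ∞) and let α ≥ 1 satisfy α > (1/2) · 4^{1/p} / ( 2·4^{1/p} − (2 + 2^p)^{1/p} ). Let Γ be the 8-cycle with vertexes b₁, b₂, b₃, b₄, t₄, t₃, t₂, t₁ in cyclic order, all of vertex weight 1, and edge weights g(b₁b₂) = 4α, g(b₂b₃) = 10α, g(b₃b₄) = 4α, g(b₄t₄) = 1, g(t₄t₃) = 2, g(t₃t₂) = 10α, g(t₂t₁) = 2, g(t₁b₁) = 1. Let I be the 4-partition whose cut set consists of the two edges of weight 1, one edge of weight 2 and one edge of weight 4α (so that I is a 2-refining of the 2-partition {{b₁,b₂,b₃,b₄},{t₁,t₂,t₃,t₄}}, with cut energy 4 + 4α and p-deviation energy 4^{1/p}). Then for every λ ∈ [0,1], I is not a minimal 4-partition of F_{λ,p}: either the 4-partition D = {{t₁,b₁},{b₂,b₃},{b₄,t₄},{t₂,t₃}} (cut energy 4 + 8α, p-deviation 0) or the 4-partition C = {{t₁},{b₁,b₂,b₃,b₄},{t₄},{t₂,t₃}} (cut energy 6, p-deviation (2 + 2^p)^{1/p}) has strictly smaller F_{λ,p}-energy. -/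

import Mathlib

open Finset

namespace Districting

variable {V : Type*} [Fintype V] [DecidableEq V]

/-- An `N`-partition of a graph `G`: a family of `N` pairwise disjoint sets of
vertexes covering all of `V`, each inducing a connected subgraph of `G`. -/
structure Partition (G : SimpleGraph V) (N : ℕ) where
  part : Fin N → Finset V
  disj : ∀ k l, k ≠ l → Disjoint (part k) (part l)
  covers : ∀ v : V, ∃ k, v ∈ part k
  connected : ∀ k, (G.induce (part k : Set V)).Connected

/-- The mass of a set of vertexes w.r.t. the vertex weight `f`. -/
def mass (f : V → ℝ) (s : Finset V) : ℝ := ∑ v ∈ s, f v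

/-- The total mass of the graph w.r.t. the vertex weight `f`. -/
def totalMass (f : V → ℝ) : ℝ := ∑ v : V, f v

open Classical in
/-- The cut (perimeter) energy of a partition: the sum of the weights of edges
whose endpoints lie in different parts. -/
noncomputable def cutEnergy (G : SimpleGraph V) (g : Sym2 V → ℝ) {N : ℕ}
    (P : Partition G N) : ℝ :=
  ∑ e : Sym2 V,
    if e ∈ G.edgeSet ∧ ∀ k, ¬ (∀ v ∈ e, v ∈ P.part k) then g e else 0

/-- The deviation energy of a partition: the standard deviation of the masses
from the mean mass. -/
noncomputable def deviation {G : SimpleGraph V} (f : V → ℝ) {N : ℕ}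
    (P : Partition G N) : ℝ :=
  Real.sqrt (∑ k : Fin N, (mass f (P.part k) - totalMass f / (N : ℝ)) ^ 2)

/-- The energy functional `F_λ`. -/
noncomputable def energy (G : SimpleGraph V) (f : V → ℝ) (g : Sym2 V → ℝ)
    (lam : ℝ) {N : ℕ} (P : Partition G N) : ℝ :=
  lam * cutEnergy G g P + (1 - lam) * deviation f P

end Districting

namespace Districting

/-- The `p`-deviation energy (`p`-th central moment) of a partition, `p ∈ [1,∞)`. -/
noncomputable def pDeviation {V : Type*} [Fintype V] [DecidableEq V]
    {G : SimpleGraph V} (f : V → ℝ) (p : ℝ) {N : ℕ} (P : Partition G N) : ℝ :=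
  (∑ k : Fin N, |mass f (P.part k) - totalMass f / (N : ℝ)| ^ p) ^ (1 / p)

/-- The `∞`-deviation energy of a partition. -/
noncomputable def infDeviation {V : Type*} [Fintype V] [DecidableEq V]
    {G : SimpleGraph V} (f : V → ℝ) {N : ℕ} (P : Partition G N) : ℝ :=
  ⨆ k : Fin N, |mass f (P.part k) - totalMass f / (N : ℝ)|

/-- The energy functional `F_{λ,p}` with `p`-deviation penalization. -/
noncomputable def energyP {V : Type*} [Fintype V] [DecidableEq V]
    (G : SimpleGraph V) (f : V → ℝ) (g : Sym2 V → ℝ)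
    (lam p : ℝ) {N : ℕ} (P : Partition G N) : ℝ :=
  lam * cutEnergy G g P + (1 - lam) * pDeviation f p P

/-- The energy functional `F_{λ,∞}` with `∞`-deviation penalization. -/
noncomputable def energyInf {V : Type*} [Fintype V] [DecidableEq V]
    (G : SimpleGraph V) (f : V → ℝ) (g : Sym2 V → ℝ)
    (lam : ℝ) {N : ℕ} (P : Partition G N) : ℝ :=
  lam * cutEnergy G g P + (1 - lam) * infDeviation f P

end Districting

namespace Districting

/-- `Q` is a `j`-refining of `P`: up to relabelling, `Q` splits each part of `P`
into exactly `j` parts. -/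
def IsRefining {V : Type*} [Fintype V] [DecidableEq V]
    {G : SimpleGraph V} {M N : ℕ} (j : ℕ)
    (Q : Partition G M) (P : Partition G N) : Prop :=
  ∃ φ : Fin M → Fin N,
    (∀ i, Q.part i ⊆ P.part (φ i)) ∧
      ∀ k, (Finset.univ.filter (fun i => φ i = k)).card = j

end Districting

namespace Districting

/-- The 8-cycle with vertexes `b₁ = 0`, `b₂ = 1`, `b₃ = 2`, `b₄ = 3`, `t₄ = 4`,
`t₃ = 5`, `t₂ = 6`, `t₁ = 7` in cyclic order. -/
def cycleGraph8 : SimpleGraph (Fin 8) :=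
  SimpleGraph.fromRel (fun u v => v = u + 1)

/-- The vertex partition of the `4`-partition `D`. -/
def rangeD : Set (Finset (Fin 8)) :=
  {({7, 0} : Finset (Fin 8)), ({1, 2} : Finset (Fin 8)),
    ({3, 4} : Finset (Fin 8)), ({5, 6} : Finset (Fin 8))}

/-- The vertex partition of the `4`-partition `C`. -/
def rangeC : Set (Finset (Fin 8)) :=
  {({7} : Finset (Fin 8)), ({0, 1, 2, 3} : Finset (Fin 8)),
    ({4} : Finset (Fin 8)), ({5, 6} : Finset (Fin 8))}

/-- The vertex partition of the bottom/top `2`-partition. -/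
def rangeBT : Set (Finset (Fin 8)) :=
  {({0, 1, 2, 3} : Finset (Fin 8)), ({4, 5, 6, 7} : Finset (Fin 8))}

/-- The four possible vertex partitions of a `4`-partition `I` whose cut set
consists of the two weight-`1` edges, one weight-`2` edge and one
weight-`4α` edge. -/
def isTypeI (I : Partition cycleGraph8 4) : Prop :=
  Set.range I.part
      = ({({0} : Finset (Fin 8)), ({1, 2, 3} : Finset (Fin 8)),
          ({4} : Finset (Fin 8)), ({5, 6, 7} : Finset (Fin 8))} :
          Set (Finset (Fin 8))) ∨
    Set.range I.part
      = ({({0} : Finset (Fin 8)), ({1, 2, 3} : Finset (Fin 8)),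
          ({4, 5, 6} : Finset (Fin 8)), ({7} : Finset (Fin 8))} :
          Set (Finset (Fin 8))) ∨
    Set.range I.part
      = ({({0, 1, 2} : Finset (Fin 8)), ({3} : Finset (Fin 8)),
          ({4} : Finset (Fin 8)), ({5, 6, 7} : Finset (Fin 8))} :
          Set (Finset (Fin 8))) ∨
    Set.range I.part
      = ({({0, 1, 2} : Finset (Fin 8)), ({3} : Finset (Fin 8)),
          ({4, 5, 6} : Finset (Fin 8)), ({7} : Finset (Fin 8))} :
          Set (Finset (Fin 8)))

/-!
With unit vertex weights the `p`-deviation of a partition depends only on its part sizes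
(`1, 1, 3, 3` for `I`, `2, 2, 2, 2` for `D`, `1, 4, 1, 2` for `C`), and the cut energy only on how
many edges of each weight it cuts, so all the energies are finite computations. With
`A = 4^{1/p}` and `B = (2 + 2^p)^{1/p}` one has `A ≤ B < 2A` and
`F(I) = λ(4 + 4α) + (1 - λ)A`, `F(D) = λ(4 + 8α)`, `F(C) = 6λ + (1 - λ)B`.
`D` beats `I` unless `4αλ ≥ (1 - λ)A`; then `λ > 0`, and `α > A / (2(2A - B))` gives
`(1 - λ)(B - A) < λ(4α - 2)`, i.e. `C` beats `I`.
-/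

namespace Partition

variable {V : Type*} {G : SimpleGraph V} {N : ℕ}

theorem part_nonempty (P : Partition G N) (k : Fin N) : (P.part k).Nonempty := by
  obtain ⟨⟨v, hv⟩⟩ := (P.connected k).nonempty
  exact ⟨v, hv⟩

theorem eq_of_subset_part (P : Partition G N) {s : Finset V} (hs : s.Nonempty) {k l : Fin N}
    (hk : s ⊆ P.part k) (hl : s ⊆ P.part l) : k = l := by
  by_contra hkl
  obtain ⟨v, hv⟩ := hs
  exact Finset.disjoint_left.1 (P.disj k l hkl) (hk hv) (hl hv)

theorem part_injective (P : Partition G N) : Function.Injective P.part := fun k _ hkl =>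
  P.eq_of_subset_part (P.part_nonempty k) subset_rfl hkl.le

theorem sum_part_eq_sum [DecidableEq V] {β : Type*} [AddCommMonoid β] {T : Finset (Finset V)}
    (P : Partition G N) (hT : Set.range P.part = T) (F : Finset V → β) :
    ∑ k, F (P.part k) = ∑ s ∈ T, F s := by
  have himage : univ.image P.part = T := by
    apply Finset.coe_injective
    rw [coe_image, coe_univ, Set.image_univ, hT]
  rw [← himage, sum_image fun k _ l _ hkl => P.part_injective hkl]

theorem card_filter_part [DecidableEq V] {T : Finset (Finset V)} (P : Partition G N)
    (hT : Set.range P.part = T) (q : Finset V → Prop) [DecidablePred q] :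
    #{k | q (P.part k)} = #{s ∈ T | q s} := by
  simp only [card_filter]
  exact P.sum_part_eq_sum hT fun s => if q s then 1 else 0

end Partition

section Refining

variable {V : Type*} [Fintype V] [DecidableEq V] {G : SimpleGraph V} {M N : ℕ}

theorem isRefining_of_forall_subset {j : ℕ} {Q : Partition G M} {P : Partition G N}
    (hsub : ∀ i, ∃ k, Q.part i ⊆ P.part k) (hcard : ∀ k, #{i | Q.part i ⊆ P.part k} = j) :
    IsRefining j Q P := by
  choose φ hφ using hsub
  refine ⟨φ, hφ, fun k => ?_⟩
  rw [← hcard k]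
  congr 1
  ext i
  simp only [mem_filter, mem_univ, true_and]
  exact ⟨fun h => h ▸ hφ i, fun h => P.eq_of_subset_part (Q.part_nonempty i) (hφ i) h⟩

theorem isRefining_of_range {j : ℕ} {Q : Partition G M} {P : Partition G N}
    {T S : Finset (Finset V)} (hQ : Set.range Q.part = T) (hP : Set.range P.part = S)
    (hsub : ∀ s ∈ T, ∃ b ∈ S, s ⊆ b) (hcard : ∀ b ∈ S, #{s ∈ T | s ⊆ b} = j) :
    IsRefining j Q P := by
  have mem_T (i : Fin M) : Q.part i ∈ T := by rw [← mem_coe, ← hQ]; exact ⟨i, rfl⟩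
  have mem_S (k : Fin N) : P.part k ∈ S := by rw [← mem_coe, ← hP]; exact ⟨k, rfl⟩
  refine isRefining_of_forall_subset (fun i => ?_) fun k => ?_
  · obtain ⟨b, hb, hsb⟩ := hsub _ (mem_T i)
    obtain ⟨k, rfl⟩ : b ∈ Set.range P.part := hP ▸ hb
    exact ⟨k, hsb⟩
  · rw [Q.card_filter_part hQ (· ⊆ P.part k)]
    exact hcard _ (mem_S k)

end Refining

section Energies

variable {V : Type*} [Fintype V] [DecidableEq V] {G : SimpleGraph V} {N : ℕ}

def cutEdges (G : SimpleGraph V) [DecidableRel G.Adj] (T : Finset (Finset V)) :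
    Finset (Sym2 V) :=
  {e | e ∈ G.edgeSet ∧ ∀ s ∈ T, ¬ ∀ v ∈ e, v ∈ s}

theorem mem_edgeSet_of_mem_cutEdges [DecidableRel G.Adj] {T : Finset (Finset V)} {e : Sym2 V}
    (he : e ∈ cutEdges G T) : e ∈ G.edgeSet :=
  (mem_filter.1 he).2.1

theorem cutEnergy_eq_sum_cutEdges [DecidableRel G.Adj] (g : Sym2 V → ℝ) {P : Partition G N}
    {T : Finset (Finset V)} (hT : Set.range P.part = T) :
    cutEnergy G g P = ∑ e ∈ cutEdges G T, g e := by
  have hcut (e : Sym2 V) :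
      (∀ k, ¬ ∀ v ∈ e, v ∈ P.part k) ↔ ∀ s ∈ T, ¬ ∀ v ∈ e, v ∈ s := by
    rw [← Set.forall_mem_range (p := fun s : Finset V => ¬ ∀ v ∈ e, v ∈ s), hT]
    rfl
  simp only [cutEnergy, cutEdges, sum_filter, hcut]

theorem pDeviation_eq_of_forall_eq_one {f : V → ℝ} (hf : ∀ v, f v = 1) (p : ℝ)
    {P : Partition G N} {T : Finset (Finset V)} (hT : Set.range P.part = T) :
    pDeviation f p P =
      ((T.val.map card).map fun n : ℕ => |(n : ℝ) - Fintype.card V / N| ^ p).sum ^ (1 / p) := by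
  simp only [pDeviation, mass, totalMass, hf, sum_const, card_univ, nsmul_eq_mul, mul_one]
  rw [P.sum_part_eq_sum hT (fun s => |(#s : ℝ) - Fintype.card V / N| ^ p), Multiset.map_map]
  rfl

end Energies

section RealInequalities

theorem four_rpow_le_two_add_two_rpow_rpow {p : ℝ} (hp : 1 ≤ p) :
    (4 : ℝ) ^ (1 / p) ≤ (2 + 2 ^ p) ^ (1 / p) := by
  have h2p : (2 : ℝ) ≤ 2 ^ p := by
    simpa using Real.rpow_le_rpow_of_exponent_le (by norm_num : (1 : ℝ) ≤ 2) hp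
  exact Real.rpow_le_rpow (by norm_num) (by linarith) (by positivity)

theorem two_add_two_rpow_rpow_lt_two_mul_four_rpow {p : ℝ} (hp : 0 < p) :
    ((2 : ℝ) + 2 ^ p) ^ (1 / p) < 2 * 4 ^ (1 / p) := by
  have h1 : (1 : ℝ) ≤ 2 ^ p := Real.one_le_rpow (by norm_num) hp.le
  calc ((2 : ℝ) + 2 ^ p) ^ (1 / p) < (4 * 2 ^ p) ^ (1 / p) :=
        Real.rpow_lt_rpow (by positivity) (by linarith) (by positivity)
    _ = 2 * 4 ^ (1 / p) := by
        rw [Real.mul_rpow (by norm_num) (by positivity), ← Real.rpow_mul (by norm_num),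
          mul_one_div_cancel hp.ne', Real.rpow_one, mul_comm]

theorem energyD_lt_or_energyC_lt {A B α lam : ℝ} (hA : 0 < A) (hAB : A ≤ B)
    (hα : A < 2 * α * (2 * A - B)) (hlam : 0 ≤ lam) :
    lam * (4 + 8 * α) < lam * (4 + 4 * α) + (1 - lam) * A ∨
      lam * 6 + (1 - lam) * B < lam * (4 + 4 * α) + (1 - lam) * A := by
  by_cases hD : lam * (4 * α) < (1 - lam) * A
  · left; linarith
  right
  rw [not_lt] at hD
  have hlam_pos : 0 < lam := hlam.lt_of_ne (by rintro rfl; linarith)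
  have key : A * ((1 - lam) * (B - A)) < A * (lam * (4 * α - 2)) := by
    nlinarith [mul_le_mul_of_nonneg_right hD (sub_nonneg.mpr hAB),
      mul_lt_mul_of_pos_left hα hlam_pos]
  linarith [lt_of_mul_lt_mul_left key hA.le]

end RealInequalities

section Cycle

set_option maxRecDepth 10000

instance : DecidableRel cycleGraph8.Adj := fun a b =>
  decidable_of_iff _ (SimpleGraph.fromRel_adj _ a b).symm

instance {s : Set (Fin 8)} : DecidableRel (cycleGraph8.induce s).Adj :=
  fun u v => inferInstanceAs (Decidable (cycleGraph8.Adj u.val v.val))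

theorem cycleGraph8_edge_cases : ∀ e ∈ cycleGraph8.edgeSet,
    e = s(0, 1) ∨ e = s(1, 2) ∨ e = s(2, 3) ∨ e = s(3, 4) ∨
      e = s(4, 5) ∨ e = s(5, 6) ∨ e = s(6, 7) ∨ e = s(7, 0) := by
  decide

/- Splitting each edge weight into an `α`-part and a constant part turns the cut energy of a
concrete partition into two `decide`-able natural-number sums. -/

def cycleWeightAlpha (e : Sym2 (Fin 8)) : ℕ :=
  if e = s(0, 1) ∨ e = s(2, 3) then 4 else if e = s(1, 2) ∨ e = s(5, 6) then 10 else 0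

def cycleWeightConst (e : Sym2 (Fin 8)) : ℕ :=
  if e = s(3, 4) ∨ e = s(7, 0) then 1 else if e = s(4, 5) ∨ e = s(6, 7) then 2 else 0

def cycleWeight (α : ℝ) (e : Sym2 (Fin 8)) : ℝ := cycleWeightAlpha e * α + cycleWeightConst e

theorem eqOn_cycleWeight {g : Sym2 (Fin 8) → ℝ} {α : ℝ}
    (hg₀₁ : g s(0, 1) = 4 * α) (hg₁₂ : g s(1, 2) = 10 * α)
    (hg₂₃ : g s(2, 3) = 4 * α) (hg₃₄ : g s(3, 4) = 1)
    (hg₄₅ : g s(4, 5) = 2) (hg₅₆ : g s(5, 6) = 10 * α)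
    (hg₆₇ : g s(6, 7) = 2) (hg₇₀ : g s(7, 0) = 1) :
    Set.EqOn g (cycleWeight α) cycleGraph8.edgeSet := by
  intro e he
  rcases cycleGraph8_edge_cases e he with rfl | rfl | rfl | rfl | rfl | rfl | rfl | rfl <;>
    simp [cycleWeight, cycleWeightAlpha, cycleWeightConst, *]

variable {g : Sym2 (Fin 8) → ℝ} {α : ℝ}

theorem cutEnergy_cycleGraph8
    (hg : Set.EqOn g (cycleWeight α) cycleGraph8.edgeSet)
    {N : ℕ} {P : Partition cycleGraph8 N} {T : Finset (Finset (Fin 8))}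
    (hT : Set.range P.part = T) {a c : ℕ}
    (ha : ∑ e ∈ cutEdges cycleGraph8 T, cycleWeightAlpha e = a)
    (hc : ∑ e ∈ cutEdges cycleGraph8 T, cycleWeightConst e = c) :
    cutEnergy cycleGraph8 g P = a * α + c := by
  rw [cutEnergy_eq_sum_cutEdges g hT, ← ha, ← hc]
  push_cast
  rw [sum_mul, ← sum_add_distrib]
  exact sum_congr rfl fun e he => hg (mem_edgeSet_of_mem_cutEdges he)

theorem pDeviation_cycleGraph8 {f : Fin 8 → ℝ} (hf : ∀ v, f v = 1) (p : ℝ)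
    {P : Partition cycleGraph8 4} {T : Finset (Finset (Fin 8))} (hT : Set.range P.part = T)
    {m : Multiset ℕ} (hm : T.val.map card = m) :
    pDeviation f p P = (m.map fun n : ℕ => |(n : ℝ) - 2| ^ p).sum ^ (1 / p) := by
  rw [pDeviation_eq_of_forall_eq_one hf p hT, hm]
  norm_num

def partD : Partition cycleGraph8 4 where
  part := ![{7, 0}, {1, 2}, {3, 4}, {5, 6}]
  disj := by decide
  covers := by decide
  connected := by intro k; fin_cases k <;> decide

def partC : Partition cycleGraph8 4 where
  part := ![{7}, {0, 1, 2, 3}, {4}, {5, 6}]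
  disj := by decide
  covers := by decide
  connected := by intro k; fin_cases k <;> decide

theorem range_partD :
    Set.range partD.part = ↑({{7, 0}, {1, 2}, {3, 4}, {5, 6}} : Finset (Finset (Fin 8))) := by
  simp only [partD, Matrix.range_cons, Matrix.range_empty, Set.union_empty, Set.singleton_union,
    coe_insert, coe_singleton]

theorem range_partC :
    Set.range partC.part = ↑({{7}, {0, 1, 2, 3}, {4}, {5, 6}} : Finset (Finset (Fin 8))) := by
  simp only [partC, Matrix.range_cons, Matrix.range_empty, Set.union_empty, Set.singleton_union,
    coe_insert, coe_singleton]

theorem range_partD_eq_rangeD : Set.range partD.part = rangeD := by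
  rw [range_partD, rangeD]
  push_cast
  rfl

theorem range_partC_eq_rangeC : Set.range partC.part = rangeC := by
  rw [range_partC, rangeC]
  push_cast
  rfl

theorem cutEnergy_partD
    (hg : Set.EqOn g (cycleWeight α) cycleGraph8.edgeSet) :
    cutEnergy cycleGraph8 g partD = 4 + 8 * α := by
  rw [cutEnergy_cycleGraph8 hg range_partD (by decide : _ = 8) (by decide : _ = 4)]
  push_cast
  ring

theorem cutEnergy_partC
    (hg : Set.EqOn g (cycleWeight α) cycleGraph8.edgeSet) :
    cutEnergy cycleGraph8 g partC = 6 := by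
  rw [cutEnergy_cycleGraph8 hg range_partC (by decide : _ = 0) (by decide : _ = 6)]
  norm_num

theorem pDeviation_partD {f : Fin 8 → ℝ} (hf : ∀ v, f v = 1) {p : ℝ} (hp : p ≠ 0) :
    pDeviation f p partD = 0 := by
  rw [pDeviation_cycleGraph8 hf p range_partD (by decide : _ = {2, 2, 2, 2})]
  norm_num [hp]

theorem pDeviation_partC {f : Fin 8 → ℝ} (hf : ∀ v, f v = 1) {p : ℝ} (hp : p ≠ 0) :
    pDeviation f p partC = (2 + 2 ^ p) ^ (1 / p) := by
  rw [pDeviation_cycleGraph8 hf p range_partC (by decide : _ = {1, 4, 1, 2})]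
  norm_num [hp]
  ring_nf

def typeIParts : Finset (Finset (Finset (Fin 8))) :=
  {{{0}, {1, 2, 3}, {4}, {5, 6, 7}}, {{0}, {1, 2, 3}, {4, 5, 6}, {7}},
    {{0, 1, 2}, {3}, {4}, {5, 6, 7}}, {{0, 1, 2}, {3}, {4, 5, 6}, {7}}}

theorem isTypeI_iff {I : Partition cycleGraph8 4} :
    isTypeI I ↔ ∃ T ∈ typeIParts, Set.range I.part = T := by
  simp only [isTypeI, typeIParts, mem_insert, mem_singleton, exists_eq_or_imp, exists_eq_left,
    coe_insert, coe_singleton]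

theorem cutEnergy_of_isTypeI
    (hg : Set.EqOn g (cycleWeight α) cycleGraph8.edgeSet)
    {I : Partition cycleGraph8 4} (hI : isTypeI I) :
    cutEnergy cycleGraph8 g I = 4 + 4 * α := by
  obtain ⟨T, hT, hIT⟩ := isTypeI_iff.1 hI
  have hweights : ∑ e ∈ cutEdges cycleGraph8 T, cycleWeightAlpha e = 4 ∧
      ∑ e ∈ cutEdges cycleGraph8 T, cycleWeightConst e = 4 := by
    simp only [typeIParts, mem_insert, mem_singleton] at hT
    rcases hT with rfl | rfl | rfl | rfl <;> decide
  rw [cutEnergy_cycleGraph8 hg hIT hweights.1 hweights.2]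
  push_cast
  ring

theorem pDeviation_of_isTypeI {f : Fin 8 → ℝ} (hf : ∀ v, f v = 1) (p : ℝ)
    {I : Partition cycleGraph8 4} (hI : isTypeI I) :
    pDeviation f p I = 4 ^ (1 / p) := by
  obtain ⟨T, hT, hIT⟩ := isTypeI_iff.1 hI
  have hcards : T.val.map card = {1, 1, 3, 3} := by
    simp only [typeIParts, mem_insert, mem_singleton] at hT
    rcases hT with rfl | rfl | rfl | rfl <;> decide
  rw [pDeviation_cycleGraph8 hf p hIT hcards]
  norm_num

theorem isRefining_of_isTypeI {I : Partition cycleGraph8 4} (hI : isTypeI I)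
    {P : Partition cycleGraph8 2} (hP : Set.range P.part = rangeBT) : IsRefining 2 I P := by
  obtain ⟨T, hT, hIT⟩ := isTypeI_iff.1 hI
  let S : Finset (Finset (Fin 8)) := {{0, 1, 2, 3}, {4, 5, 6, 7}}
  have hPS : Set.range P.part = S := by
    rw [hP, rangeBT]
    simp only [S, coe_insert, coe_singleton]
  have hsplit : (∀ s ∈ T, ∃ b ∈ S, s ⊆ b) ∧ ∀ b ∈ S, #{s ∈ T | s ⊆ b} = 2 := by
    simp only [typeIParts, mem_insert, mem_singleton] at hT
    rcases hT with rfl | rfl | rfl | rfl <;> decide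
  exact isRefining_of_range hIT hPS hsplit.1 hsplit.2

end Cycle

theorem cycle8_p_norm_no_refining_general
    (p : ℝ) (hp : 1 ≤ p)
    (α : ℝ)
    (hα : α > (1 / 2) * (4 : ℝ) ^ (1 / p) /
        (2 * (4 : ℝ) ^ (1 / p) - ((2 : ℝ) + (2 : ℝ) ^ p) ^ (1 / p)))
    (f : Fin 8 → ℝ) (hf : ∀ v, f v = 1)
    (g : Sym2 (Fin 8) → ℝ)
    (hg₀₁ : g s(0, 1) = 4 * α) (hg₁₂ : g s(1, 2) = 10 * α)
    (hg₂₃ : g s(2, 3) = 4 * α) (hg₃₄ : g s(3, 4) = 1)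
    (hg₄₅ : g s(4, 5) = 2) (hg₅₆ : g s(5, 6) = 10 * α)
    (hg₆₇ : g s(6, 7) = 2) (hg₇₀ : g s(7, 0) = 1) :
    ∀ I : Partition cycleGraph8 4, isTypeI I →
      (cutEnergy cycleGraph8 g I = 4 + 4 * α ∧
          pDeviation f p I = (4 : ℝ) ^ (1 / p)) ∧
        (∀ P : Partition cycleGraph8 2, Set.range P.part = rangeBT →
          IsRefining 2 I P) ∧
        ∀ lam ∈ Set.Icc (0 : ℝ) 1,
          ∃ R : Partition cycleGraph8 4,
            (Set.range R.part = rangeD ∨ Set.range R.part = rangeC) ∧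
              energyP cycleGraph8 f g lam p R
                < energyP cycleGraph8 f g lam p I := by
  intro I hI
  have hg := eqOn_cycleWeight hg₀₁ hg₁₂ hg₂₃ hg₃₄ hg₄₅ hg₅₆ hg₆₇ hg₇₀
  have hp0 : p ≠ 0 := by positivity
  refine ⟨⟨cutEnergy_of_isTypeI hg hI, pDeviation_of_isTypeI hf p hI⟩,
    fun P hP => isRefining_of_isTypeI hI hP, fun lam hlam => ?_⟩
  have hA : (0 : ℝ) < 4 ^ (1 / p) := by positivity
  have hB := two_add_two_rpow_rpow_lt_two_mul_four_rpow (p := p) (by positivity)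
  have hα' : (4 : ℝ) ^ (1 / p) < 2 * α * (2 * 4 ^ (1 / p) - (2 + 2 ^ p) ^ (1 / p)) := by
    rw [gt_iff_lt, div_lt_iff₀ (by linarith)] at hα
    linarith
  simp only [energyP, cutEnergy_of_isTypeI hg hI, pDeviation_of_isTypeI hf p hI]
  rcases energyD_lt_or_energyC_lt hA (four_rpow_le_two_add_two_rpow_rpow hp) hα' hlam.1
    with hD | hC
  · refine ⟨partD, Or.inl range_partD_eq_rangeD, ?_⟩
    rw [cutEnergy_partD hg, pDeviation_partD hf hp0]
    linarith
  · refine ⟨partC, Or.inr range_partC_eq_rangeC, ?_⟩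
    rw [cutEnergy_partC hg, pDeviation_partC hf hp0]
    exact hC

/-- Example `ex:cex_p`: on the `α`-weighted 8-cycle, for `p ∈ [1,∞)`
and `α ≥ 1` with `α > (1/2)·4^{1/p}/(2·4^{1/p} − (2+2^p)^{1/p})`, any `4`-partition
`I` cutting the two weight-`1` edges, one weight-`2` edge and one weight-`4α` edge
(a `2`-refining of the bottom/top `2`-partition, with cut energy `4 + 4α` and
`p`-deviation `4^{1/p}`) is never minimal for `F_{λ,p}`: either `D` or `C` has
strictly smaller energy. -/
theorem cycle8_p_norm_no_refining
    (p : ℝ) (hp : 1 ≤ p)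
    (α : ℝ) (hα₁ : 1 ≤ α)
    (hα : α > (1 / 2) * (4 : ℝ) ^ (1 / p) /
        (2 * (4 : ℝ) ^ (1 / p) - ((2 : ℝ) + (2 : ℝ) ^ p) ^ (1 / p)))
    (f : Fin 8 → ℝ) (hf : ∀ v, f v = 1)
    (g : Sym2 (Fin 8) → ℝ)
    (hg₀₁ : g s(0, 1) = 4 * α) (hg₁₂ : g s(1, 2) = 10 * α)
    (hg₂₃ : g s(2, 3) = 4 * α) (hg₃₄ : g s(3, 4) = 1)
    (hg₄₅ : g s(4, 5) = 2) (hg₅₆ : g s(5, 6) = 10 * α)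
    (hg₆₇ : g s(6, 7) = 2) (hg₇₀ : g s(7, 0) = 1) :
    ∀ I : Partition cycleGraph8 4, isTypeI I →
      (cutEnergy cycleGraph8 g I = 4 + 4 * α ∧
          pDeviation f p I = (4 : ℝ) ^ (1 / p)) ∧
        (∀ P : Partition cycleGraph8 2, Set.range P.part = rangeBT →
          IsRefining 2 I P) ∧
        ∀ lam ∈ Set.Icc (0 : ℝ) 1,
          ∃ R : Partition cycleGraph8 4,
            (Set.range R.part = rangeD ∨ Set.range R.part = rangeC) ∧
              energyP cycleGraph8 f g lam p R
                < energyP cycleGraph8 f g lam p I :=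
  cycle8_p_norm_no_refining_general p hp α hα f hf g hg₀₁ hg₁₂ hg₂₃ hg₃₄ hg₄₅ hg₅₆ hg₆₇ hg₇₀

end Districting
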